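/- For any non-negative integer q and positive integer n, F_q(n) := Σ_{d | n} (μ(d)/d) (log d)^q = O( f(n,1) (log log n)^q ), where f(n,s) := ∏_{p | n} (1 − p^{−s}) and μ is the Möbius function. -/

import Mathlib

/-!
Only the squarefree divisors `d = ∏ T`, `T ⊆ P := {p ∣ n}`, contribute, so the sum is
`G_q(P) = ∑_{T ⊆ P} (-1)^|T| / ∏ T * (∑_{p ∈ T} log p)^q`. Adjoining a prime `p` to `P` gives the
Leibniz-type recurrence
`G_q(P ∪ {p}) = (1 - 1/p) G_q(P) - (1/p) ∑_{j<q} C(q,j) (log p)^(q-j) G_j(P)`.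
Dividing by `f(P ∪ {p}) = (1 - 1/p) f(P)` and inducting on `q` and on `P` gives
`|G_q(P)| ≤ a_q f(P) V^q` whenever `S_k(P) := ∑_{p ∈ P} (log p)^k / (p - 1) ≤ V^k` for `1 ≤ k ≤ q`,
where `a_q = ∑_{j<q} C(q,j) a_j` are the ordered Bell numbers.

It remains to see `S_k(P) = O((log log n)^k)`. The primes `p ≤ log n` contribute at most
`(log log n)^(k-1) ∑_{p ≤ log n} log p / p = O((log log n)^k)` by Mertens' bound, which follows from
Legendre's formula for `N!`. The primes `p > log n` have logarithms summing to at most `log n`, and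
`(log t)^k / t` decreases for `t ≥ e^k`, so they contribute at most `(log log n)^(k-1)`.
-/
open Filter

/-- `f(n,s) = ∏_{p | n} (1 − p^{−s})` (for real `s`). -/
noncomputable def fEuler (n : ℕ) (s : ℝ) : ℝ :=
  ∏ p ∈ n.primeFactors, (1 - (p : ℝ) ^ (-s))

open Finset Real

def orderedBell : ℕ → ℕ
  | 0 => 1
  | q + 1 => ∑ j : Fin (q + 1), (q + 1).choose j * orderedBell j

theorem orderedBell_eq_sum {q : ℕ} (hq : q ≠ 0) :
    orderedBell q = ∑ j ∈ range q, q.choose j * orderedBell j := by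
  obtain ⟨q, rfl⟩ := Nat.exists_eq_succ_of_ne_zero hq
  rw [orderedBell, Fin.sum_univ_eq_sum_range (fun j => (q + 1).choose j * orderedBell j)]

theorem orderedBell_pos (q : ℕ) : 0 < orderedBell q := by
  cases q with
  | zero => simp [orderedBell]
  | succ q => exact (orderedBell_eq_sum q.succ_ne_zero) ▸
      sum_pos' (fun j _ => by positivity) ⟨0, by simp, by simp [orderedBell]⟩

noncomputable def moebiusLogSum (q : ℕ) (P : Finset ℕ) : ℝ :=
  ∑ T ∈ P.powerset, (-1) ^ #T / (∏ p ∈ T, (p : ℝ)) * (∑ p ∈ T, log p) ^ q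

theorem moebiusLogSum_insert (q : ℕ) {P : Finset ℕ} {p : ℕ} (hp : p ∉ P) :
    moebiusLogSum q (insert p P) = (1 - (p : ℝ)⁻¹) * moebiusLogSum q P
      - (p : ℝ)⁻¹ * ∑ j ∈ range q, q.choose j * log p ^ (q - j) * moebiusLogSum j P := by
  have hT : ∀ T ∈ P.powerset, p ∉ T := fun T hT hpT => hp (mem_powerset.mp hT hpT)
  have hexpand : ∀ T ∈ P.powerset,
      (-1 : ℝ) ^ #(insert p T) / (∏ r ∈ insert p T, (r : ℝ)) * (∑ r ∈ insert p T, log r) ^ q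
        = -(p : ℝ)⁻¹ * ∑ j ∈ range (q + 1), q.choose j * log p ^ (q - j) *
            ((-1) ^ #T / (∏ r ∈ T, (r : ℝ)) * (∑ r ∈ T, log r) ^ j) := by
    intro T hT'
    rw [card_insert_of_notMem (hT T hT'), prod_insert (hT T hT'), sum_insert (hT T hT'),
      add_comm (log (p : ℝ)), add_pow, mul_sum, mul_sum]
    refine sum_congr rfl fun j _ => ?_
    field_simp
    ring
  rw [moebiusLogSum, sum_powerset_insert hp, sum_congr rfl hexpand, ← mul_sum, sum_comm,
    sum_range_succ, Nat.choose_self, Nat.sub_self]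
  simp only [← mul_sum, moebiusLogSum]
  ring

theorem moebiusLogSum_zero_left (P : Finset ℕ) :
    moebiusLogSum 0 P = ∏ p ∈ P, (1 - (p : ℝ)⁻¹) := by
  induction P using Finset.induction_on with
  | empty => simp [moebiusLogSum]
  | insert p P hp ih => simp [moebiusLogSum_insert 0 hp, prod_insert hp, ih]

theorem moebiusLogSum_empty {q : ℕ} (hq : q ≠ 0) : moebiusLogSum q ∅ = 0 := by
  simp [moebiusLogSum, hq]

theorem prod_one_sub_inv_nonneg {P : Finset ℕ} (hP : ∀ p ∈ P, 1 < p) :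
    0 ≤ ∏ p ∈ P, (1 - (p : ℝ)⁻¹) :=
  prod_nonneg fun p hp => sub_nonneg.mpr (inv_le_one_of_one_le₀ (by exact_mod_cast (hP p hp).le))

noncomputable def logPowSum (k : ℕ) (P : Finset ℕ) : ℝ :=
  ∑ p ∈ P, log p ^ k / (p - 1)

theorem logPowSum_insert {k p : ℕ} {P : Finset ℕ} (hp : p ∉ P) :
    logPowSum k (insert p P) = log p ^ k / (p - 1) + logPowSum k P :=
  sum_insert hp

theorem logPowSum_mono {k : ℕ} {P P' : Finset ℕ} (hP' : P' ⊆ P) (hP : ∀ p ∈ P, 1 < p) :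
    logPowSum k P' ≤ logPowSum k P :=
  sum_le_sum_of_subset_of_nonneg hP' fun p hp _ => by
    have hp1 : (1 : ℝ) < p := by exact_mod_cast hP p hp
    have := log_nonneg hp1.le
    exact div_nonneg (by positivity) (by linarith)

/-- Dividing the recurrence `moebiusLogSum_insert` by `∏ (1 - p⁻¹)` turns its coefficient `p⁻¹`
into `(p - 1)⁻¹`, which is where `logPowSum` comes from. -/
theorem abs_moebiusLogSum_le_sum {q : ℕ} (hq : q ≠ 0) {P : Finset ℕ} (hP : ∀ p ∈ P, 1 < p)
    (b : ℕ → ℝ)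
    (hb : ∀ j < q, ∀ P' ⊆ P, |moebiusLogSum j P'| ≤ b j * ∏ p ∈ P', (1 - (p : ℝ)⁻¹)) :
    |moebiusLogSum q P| ≤
      (∏ p ∈ P, (1 - (p : ℝ)⁻¹)) * ∑ j ∈ range q, q.choose j * b j * logPowSum (q - j) P := by
  induction P using Finset.induction_on with
  | empty => simp [moebiusLogSum_empty hq, logPowSum]
  | insert p P hp ih =>
    have hp1 : (1 : ℝ) < p := by exact_mod_cast hP p (mem_insert_self p P)
    have hP' : ∀ r ∈ P, 1 < r := fun r hr => hP r (mem_insert_of_mem hr)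
    have hf := prod_one_sub_inv_nonneg hP'
    have hu : 0 ≤ 1 - (p : ℝ)⁻¹ := sub_nonneg.mpr (inv_le_one_of_one_le₀ hp1.le)
    have hlog : 0 ≤ log (p : ℝ) := log_nonneg hp1.le
    have hp0 : (p : ℝ) - 1 ≠ 0 := by linarith
    calc |moebiusLogSum q (insert p P)|
        ≤ (1 - (p : ℝ)⁻¹) * |moebiusLogSum q P|
          + (p : ℝ)⁻¹ * ∑ j ∈ range q, q.choose j * log p ^ (q - j) * |moebiusLogSum j P| := by
          rw [moebiusLogSum_insert q hp]
          refine (abs_sub _ _).trans (add_le_add ?_ ?_)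
          · rw [abs_mul, abs_of_nonneg hu]
          · rw [abs_mul, abs_of_pos (by positivity)]
            refine mul_le_mul_of_nonneg_left ((abs_sum_le_sum_abs _ _).trans ?_) (by positivity)
            refine sum_le_sum fun j _ => ?_
            rw [abs_mul, abs_of_nonneg (by positivity)]
      _ ≤ (1 - (p : ℝ)⁻¹) * ((∏ r ∈ P, (1 - (r : ℝ)⁻¹)) *
              ∑ j ∈ range q, q.choose j * b j * logPowSum (q - j) P)
          + (p : ℝ)⁻¹ * ∑ j ∈ range q, q.choose j * log p ^ (q - j) *
              (b j * ∏ r ∈ P, (1 - (r : ℝ)⁻¹)) := by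
          gcongr with j hj
          · exact ih hP' fun j hj P' hP' => hb j hj P' (hP'.trans (subset_insert p P))
          · exact hb j (mem_range.mp hj) P (subset_insert p P)
      _ = (∏ r ∈ insert p P, (1 - (r : ℝ)⁻¹)) *
            ∑ j ∈ range q, q.choose j * b j * logPowSum (q - j) (insert p P) := by
          simp only [prod_insert hp, logPowSum_insert hp, mul_sum, ← sum_add_distrib]
          refine sum_congr rfl fun j _ => ?_
          field_simp
          ring

theorem abs_moebiusLogSum_le {q : ℕ} {P : Finset ℕ} {V : ℝ} (hV : 0 ≤ V)
    (hP : ∀ p ∈ P, 1 < p) (hS : ∀ k ∈ Icc 1 q, logPowSum k P ≤ V ^ k) :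
    |moebiusLogSum q P| ≤ orderedBell q * (∏ p ∈ P, (1 - (p : ℝ)⁻¹)) * V ^ q := by
  induction q using Nat.strong_induction_on generalizing P with
  | _ q ih =>
  rcases eq_or_ne q 0 with rfl | hq
  · rw [moebiusLogSum_zero_left, abs_of_nonneg (prod_one_sub_inv_nonneg hP)]
    simp [orderedBell]
  have hb : ∀ j < q, ∀ P' ⊆ P, |moebiusLogSum j P'| ≤
      (orderedBell j * V ^ j) * ∏ p ∈ P', (1 - (p : ℝ)⁻¹) := fun j hj P' hP' => by
    rw [mul_right_comm]
    refine ih j hj (fun p hp => hP p (hP' hp)) fun k hk => ?_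
    have hkq : k ∈ Icc 1 q := by simp only [mem_Icc] at hk ⊢; omega
    exact (logPowSum_mono hP' hP).trans (hS k hkq)
  refine (abs_moebiusLogSum_le_sum hq hP _ hb).trans ?_
  rw [orderedBell_eq_sum hq, mul_comm (_ : ℝ) (∏ p ∈ P, _), mul_assoc, Nat.cast_sum, sum_mul]
  refine mul_le_mul_of_nonneg_left (sum_le_sum fun j hj => ?_) (prod_one_sub_inv_nonneg hP)
  have hjq := mem_range.mp hj
  calc (q.choose j : ℝ) * (orderedBell j * V ^ j) * logPowSum (q - j) P
      ≤ q.choose j * (orderedBell j * V ^ j) * V ^ (q - j) := by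
        gcongr
        exact hS (q - j) (by simp only [mem_Icc]; omega)
    _ = ((q.choose j * orderedBell j : ℕ) : ℝ) * V ^ q := by
        rw [← pow_sub_mul_pow V hjq.le]
        push_cast
        ring

open ArithmeticFunction (moebius) in
theorem moebius_prod_of_subset_primeFactors {n : ℕ} {T : Finset ℕ} (hT : T ⊆ n.primeFactors) :
    moebius (∏ p ∈ T, p) = (-1) ^ #T := by
  rw [ArithmeticFunction.isMultiplicative_moebius.map_prod_of_subset_primeFactors n T hT,
    prod_congr rfl fun p hp =>
      ArithmeticFunction.moebius_apply_prime (Nat.prime_of_mem_primeFactors (hT hp)),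
    prod_const]

open ArithmeticFunction (moebius) in
theorem sum_divisors_moebius_div_mul_log_pow {n : ℕ} (hn : n ≠ 0) (q : ℕ) :
    ∑ d ∈ n.divisors, ((moebius d : ℤ) : ℝ) / d * log d ^ q = moebiusLogSum q n.primeFactors := by
  have hsq : ∀ d ∈ n.divisors, ((moebius d : ℤ) : ℝ) / d * log d ^ q ≠ 0 → Squarefree d :=
    fun d _ hd => ArithmeticFunction.moebius_ne_zero_iff_squarefree.mp fun h => hd (by simp [h])
  rw [← sum_filter_of_ne hsq, Nat.sum_divisors_filter_squarefree hn, Nat.factors_eq]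
  refine sum_congr rfl fun T hT => ?_
  have hT := mem_powerset.mp hT
  have hT0 : ∀ p ∈ T, (p : ℝ) ≠ 0 := fun p hp =>
    Nat.cast_ne_zero.mpr (Nat.prime_of_mem_primeFactors (hT hp)).ne_zero
  rw [prod_val, Function.id_def, moebius_prod_of_subset_primeFactors hT, Nat.cast_prod,
    log_prod hT0]
  push_cast
  rfl

theorem fEuler_one (n : ℕ) : fEuler n 1 = ∏ p ∈ n.primeFactors, (1 - (p : ℝ)⁻¹) := by
  simp [fEuler, rpow_neg_one]

theorem sum_primesLE_div_mul_log_le_log_factorial (N : ℕ) :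
    ∑ p ∈ N.primesLE, ((N / p : ℕ) : ℝ) * log p ≤ log N.factorial := by
  have hsub : N.primesLE ⊆ N.factorial.primeFactors := fun p hp => by
    have hp' := Nat.mem_primesLE.mp hp
    exact Nat.mem_primeFactors.mpr ⟨hp'.2, hp'.2.dvd_factorial.mpr hp'.1, N.factorial_ne_zero⟩
  rw [log_nat_eq_sum_factorization, Finsupp.sum, Nat.support_factorization]
  calc ∑ p ∈ N.primesLE, ((N / p : ℕ) : ℝ) * log p
      ≤ ∑ p ∈ N.primesLE, (N.factorial.factorization p : ℝ) * log p := by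
        refine sum_le_sum fun p hp => mul_le_mul_of_nonneg_right ?_ (log_natCast_nonneg p)
        have hp' := Nat.mem_primesLE.mp hp
        have h1 : 1 ∈ Ico 1 (Nat.log p N + 1) :=
          mem_Ico.mpr ⟨le_rfl, Nat.succ_lt_succ (Nat.log_pos hp'.2.one_lt hp'.1)⟩
        have := single_le_sum (f := fun i => N / p ^ i) (fun i _ => Nat.zero_le _) h1
        rw [pow_one] at this
        rw [Nat.factorization_factorial hp'.2 (Nat.lt_succ_self _)]
        exact_mod_cast this
    _ ≤ _ := sum_le_sum_of_subset_of_nonneg hsub fun p _ _ => by positivity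

/-- Replacing `⌊N / p⌋` by `N / p` costs at most `θ(N) ≤ N log 4`. -/
theorem sum_primesLE_log_div_le (N : ℕ) :
    ∑ p ∈ N.primesLE, log p / p ≤ log N + log 4 := by
  rcases N.eq_zero_or_pos with rfl | hN
  · simp [Nat.primesLE_zero, log_nonneg]
  have hNR : (0 : ℝ) < N := by exact_mod_cast hN
  have hfact : log N.factorial ≤ N * log N := by
    rw [← log_pow]
    exact log_le_log (by exact_mod_cast N.factorial_pos) (by exact_mod_cast N.factorial_le_pow)
  have htheta := Chebyshev.theta_le_log4_mul_x hNR.le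
  rw [Chebyshev.theta_eq_sum_primesLE_log] at htheta
  rw [← mul_le_mul_iff_of_pos_left hNR, mul_sum]
  calc ∑ p ∈ N.primesLE, (N : ℝ) * (log p / p)
      ≤ ∑ p ∈ N.primesLE, (((N / p : ℕ) : ℝ) * log p + log p) := by
        refine sum_le_sum fun p _ => ?_
        have hdiv : (N : ℝ) / p ≤ ((N / p : ℕ) : ℝ) + 1 := by
          rw [← Nat.floor_div_eq_div (K := ℝ)]
          exact (Nat.lt_floor_add_one _).le
        have hlog := log_natCast_nonneg p
        calc (N : ℝ) * (log p / p) = N / p * log p := by ring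
          _ ≤ (((N / p : ℕ) : ℝ) + 1) * log p := by gcongr
          _ = _ := by ring
    _ ≤ N * (log N + log 4) := by
        rw [sum_add_distrib]
        linarith [sum_primesLE_div_mul_log_le_log_factorial N]

theorem sum_primeFactors_log_le (n : ℕ) : ∑ p ∈ n.primeFactors, log p ≤ log n := by
  rcases n.eq_zero_or_pos with rfl | hn
  · simp
  rw [← log_prod fun p hp => Nat.cast_ne_zero.mpr (Nat.prime_of_mem_primeFactors hp).ne_zero,
    ← Nat.cast_prod]
  exact log_le_log (by exact_mod_cast prod_pos fun p hp => (Nat.prime_of_mem_primeFactors hp).pos)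
    (by exact_mod_cast Nat.le_of_dvd hn n.prod_primeFactors_dvd)

theorem log_pow_div_self_antitoneOn {k : ℕ} (hk : k ≠ 0) :
    AntitoneOn (fun x : ℝ => log x ^ k / x) (Set.Ici (exp k)) := by
  have hanti := log_div_self_rpow_antitoneOn (by positivity : (0 : ℝ) < (k : ℝ)⁻¹)
  rw [inv_inv] at hanti
  intro x hx y hy hxy
  have hx0 : 0 ≤ x := (exp_pos _).le.trans hx
  have hrpow : ∀ z : ℝ, 0 ≤ z → log z ^ k / z = (log z / z ^ (k : ℝ)⁻¹) ^ k := fun z hz => by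
    rw [div_pow, rpow_inv_natCast_pow hz hk]
  have hy0 : 0 ≤ y := hx0.trans hxy
  have hlogy : 0 ≤ log y := log_nonneg (le_trans (by simp) (Set.mem_Ici.mp hy))
  simp only [hrpow x hx0, hrpow y hy0]
  exact pow_le_pow_left₀ (by positivity) (hanti hx hy hxy) k

theorem sum_log_pow_div_le_of_le {k : ℕ} (hk : k ≠ 0) {x : ℝ} (hx : 1 ≤ x) :
    ∑ p ∈ (⌊x⌋₊).primesLE, log p ^ k / p ≤ log x ^ (k - 1) * (log x + log 4) := by
  have hfloor : (1 : ℝ) ≤ ⌊x⌋₊ := by exact_mod_cast Nat.one_le_floor_iff _ |>.mpr hx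
  calc ∑ p ∈ (⌊x⌋₊).primesLE, log p ^ k / p
      ≤ ∑ p ∈ (⌊x⌋₊).primesLE, log x ^ (k - 1) * (log p / p) := by
        refine sum_le_sum fun p hp => ?_
        have hp := Nat.mem_primesLE.mp hp
        have hlogp : log p ≤ log x :=
          log_le_log (by exact_mod_cast hp.2.pos) ((Nat.le_floor_iff (by linarith)).mp hp.1)
        have hlogp0 := log_natCast_nonneg p
        calc log p ^ k / p = log p ^ (k - 1) * (log p / p) := by
              rw [← mul_div_assoc, ← pow_succ, Nat.sub_one_add_one hk]
          _ ≤ log x ^ (k - 1) * (log p / p) := by gcongr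
    _ ≤ log x ^ (k - 1) * (log x + log 4) := by
        rw [← mul_sum]
        refine mul_le_mul_of_nonneg_left ((sum_primesLE_log_div_le _).trans ?_)
          (pow_nonneg (log_nonneg hx) _)
        gcongr
        exact Nat.floor_le (by linarith)

theorem sum_log_pow_div_le_of_lt {k : ℕ} (hk : k ≠ 0) {x : ℝ} (hx : exp k ≤ x) {P : Finset ℕ}
    (hPx : ∀ p ∈ P, x < p) (hPsum : ∑ p ∈ P, log p ≤ x) :
    ∑ p ∈ P, log p ^ k / p ≤ log x ^ (k - 1) := by
  have hx0 : 0 < x := (exp_pos _).trans_le hx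
  have hlogx : 0 ≤ log x := log_nonneg ((one_le_exp (Nat.cast_nonneg k)).trans hx)
  calc ∑ p ∈ P, log p ^ k / p ≤ ∑ p ∈ P, log p * (log x ^ (k - 1) / x) := by
        refine sum_le_sum fun p hp => ?_
        have hxp := (hPx p hp).le
        calc log p ^ k / p ≤ log x ^ k / x :=
              log_pow_div_self_antitoneOn hk hx (hx.trans hxp) hxp
          _ = log x * (log x ^ (k - 1) / x) := by
              rw [← mul_div_assoc, ← pow_succ', Nat.sub_one_add_one hk]
          _ ≤ log p * (log x ^ (k - 1) / x) := by gcongr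
    _ ≤ x * (log x ^ (k - 1) / x) := by
        rw [← sum_mul]
        gcongr
    _ = log x ^ (k - 1) := by field_simp

theorem logPowSum_le_two_mul (k : ℕ) {P : Finset ℕ} (hP : ∀ p ∈ P, 2 ≤ p) :
    logPowSum k P ≤ 2 * ∑ p ∈ P, log p ^ k / p := by
  rw [logPowSum, mul_sum]
  refine sum_le_sum fun p hp => ?_
  have hp2 : (2 : ℝ) ≤ p := by exact_mod_cast hP p hp
  have := log_nonneg (by linarith : (1 : ℝ) ≤ p)
  rw [mul_div_assoc', div_le_div_iff₀ (by linarith) (by linarith)]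
  nlinarith [pow_nonneg this k]

theorem sum_primeFactors_log_pow_div_le {k : ℕ} (hk : k ≠ 0) {n : ℕ}
    (hkn : (k : ℝ) ≤ log (log n)) :
    ∑ p ∈ n.primeFactors, log p ^ k / p ≤ 5 * log (log n) ^ k := by
  set x := log n
  set L := log x
  have hL : 1 ≤ L := le_trans (by exact_mod_cast Nat.one_le_iff_ne_zero.mpr hk) hkn
  have hx0 : 0 < x := (log_natCast_nonneg n).lt_of_ne fun h => by norm_num [L, x, ← h] at hL
  have hxk : exp k ≤ x := (le_log_iff_exp_le hx0).mp hkn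
  have hx1 : 1 ≤ x := (one_le_exp (Nat.cast_nonneg k)).trans hxk
  have hsmall : n.primeFactors.filter (fun p : ℕ => (p : ℝ) ≤ x) ⊆ (⌊x⌋₊).primesLE :=
    fun p hp => by
      rw [mem_filter] at hp
      exact Nat.mem_primesLE.mpr ⟨Nat.le_floor hp.2, Nat.prime_of_mem_primeFactors hp.1⟩
  have hlarge : ∑ p ∈ n.primeFactors.filter (fun p : ℕ => ¬ (p : ℝ) ≤ x), log p ≤ x :=
    (sum_le_sum_of_subset_of_nonneg (filter_subset _ _) fun p _ _ => log_natCast_nonneg p).trans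
      (sum_primeFactors_log_le n)
  have hlog4 : log 4 ≤ 3 := by linarith [log_le_sub_one_of_pos (by norm_num : (0 : ℝ) < 4)]
  rw [← sum_filter_add_sum_filter_not _ (fun p : ℕ => (p : ℝ) ≤ x)]
  calc _ ≤ L ^ (k - 1) * (L + log 4) + L ^ (k - 1) := by
        refine add_le_add ((sum_le_sum_of_subset_of_nonneg hsmall fun p _ _ => ?_).trans
          (sum_log_pow_div_le_of_le hk hx1)) (sum_log_pow_div_le_of_lt hk hxk
            (fun p hp => not_le.mp (mem_filter.mp hp).2) hlarge)
        have := log_natCast_nonneg p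
        positivity
    _ ≤ L ^ (k - 1) * (5 * L) := by
        rw [← mul_add_one]
        gcongr
        linarith
    _ = 5 * L ^ k := by
        rw [mul_left_comm, ← pow_succ, Nat.sub_one_add_one hk]

theorem logPowSum_primeFactors_le {k : ℕ} (hk : k ≠ 0) {n : ℕ} (hkn : (k : ℝ) ≤ log (log n)) :
    logPowSum k n.primeFactors ≤ (10 * log (log n)) ^ k := by
  calc logPowSum k n.primeFactors ≤ 2 * (5 * log (log n) ^ k) :=
        (logPowSum_le_two_mul k fun p hp => (Nat.prime_of_mem_primeFactors hp).two_le).trans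
          (by gcongr; exact sum_primeFactors_log_pow_div_le hk hkn)
    _ ≤ 10 ^ k * log (log n) ^ k := by
        have hL : 0 ≤ log (log n) := (Nat.cast_nonneg k).trans hkn
        rw [← mul_assoc]
        gcongr
        norm_num
        exact le_self_pow₀ (by norm_num) hk
    _ = (10 * log (log n)) ^ k := (mul_pow _ _ _).symm

/-- **Lemma 2.4.** For any non-negative integer `q`,
`F_q(n) = Σ_{d | n} (μ(d)/d)(log d)^q = O(f(n,1)(log log n)^q)`,
where `f(n,s) = ∏_{p | n}(1 − p^{−s})` and `μ` is the Möbius function. -/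
theorem moebius_log_divisor_sum (q : ℕ) :
    ∃ C : ℝ, 0 < C ∧ ∀ᶠ n : ℕ in atTop,
      |∑ d ∈ n.divisors, ((ArithmeticFunction.moebius d : ℤ) : ℝ) / d * (Real.log d) ^ q|
        ≤ C * fEuler n 1 * (Real.log (Real.log n)) ^ q := by
  refine ⟨orderedBell q * 10 ^ q, by have := orderedBell_pos q; positivity, ?_⟩
  have hL : Tendsto (fun n : ℕ => log (log n)) atTop atTop :=
    tendsto_log_atTop.comp (tendsto_log_atTop.comp tendsto_natCast_atTop_atTop)
  filter_upwards [hL.eventually_ge_atTop (q : ℝ), eventually_ne_atTop 0] with n hqn hn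
  have hS : ∀ k ∈ Icc 1 q, logPowSum k n.primeFactors ≤ (10 * log (log n)) ^ k := fun k hk =>
    logPowSum_primeFactors_le (by simp only [mem_Icc] at hk; omega)
      ((Nat.cast_le.mpr (mem_Icc.mp hk).2).trans hqn)
  rw [sum_divisors_moebius_div_mul_log_pow hn, fEuler_one]
  calc _ ≤ orderedBell q * (∏ p ∈ n.primeFactors, (1 - (p : ℝ)⁻¹)) * (10 * log (log n)) ^ q :=
        abs_moebiusLogSum_le (by linarith [(Nat.cast_nonneg q).trans hqn])
          (fun p hp => (Nat.prime_of_mem_primeFactors hp).one_lt) hS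
    _ = _ := by ring
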